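/- arXiv:2510.10227 — 5 statements merged into one kernel-verified Lean document; each statement's English description precedes it below -/
import Mathlib

section
/- If G is an s-parallel-greedy graph (s ≥ 2) with matching decomposition M_1, M_2, ..., and C is a cycle in G with at most s+1 edges, then the highest-indexed matching M_i containing an edge of C contains at least two edges of C. -/
open SimpleGraph

/-- `M` is a decomposition of `G` into an ordered sequence of matchings witnessing that
`G` is `s`-parallel-greedy: the matchings are edge-disjoint, cover all edges of `G`,
and every edge `{u,v} ∈ M i` has distance strictly greater than `s` in the union of the
earlier matchings (with unit edge lengths, i.e. every walk has more than `s` edges). -/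
def IsParallelGreedy {V : Type*} (G : SimpleGraph V) (s k : ℕ)
    (M : Fin k → SimpleGraph V) : Prop :=
  (∀ i, M i ≤ G) ∧
  (∀ e ∈ G.edgeSet, ∃ i, e ∈ (M i).edgeSet) ∧
  (Pairwise fun i j => Disjoint (M i).edgeSet (M j).edgeSet) ∧
  (∀ i, ∀ v u w : V, (M i).Adj v u → (M i).Adj v w → u = w) ∧
  (∀ i : Fin k, ∀ u v : V, (M i).Adj u v →
    ∀ p : (⨆ j : {j : Fin k // j < i}, M j.1).Walk u v, s < p.length)

/-! Removing an edge `s(a, b)` from a closed trail leaves a shorter walk from `a` to `b`, and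
in a parallel-greedy decomposition such a walk through earlier matchings is longer than `s`.
So if the top matching met a short cycle in a single edge, the rest of the cycle would be a
walk of length at most `s` through earlier matchings joining the ends of that edge. -/

namespace SimpleGraph.Walk

variable {V : Type*} {G : SimpleGraph V}

/-- Splitting the closed trail at `b` gives two walks between `a` and `b`; the one not
containing `s(a, b)` is the required walk. -/
lemma exists_walk_avoiding_edge_of_closed_at {a b : V} (q : G.Walk a a) (hq : q.edges.Nodup)
    (he : s(a, b) ∈ q.edges) :
    ∃ w : G.Walk a b, w.edges ⊆ q.edges ∧ s(a, b) ∉ w.edges ∧ w.length < q.length := by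
  classical
  have hb : b ∈ q.support := q.snd_mem_support_of_mem_edges he
  set t := q.takeUntil b hb
  set d := q.dropUntil b hb
  have hsplit : t.append d = q := q.take_spec hb
  have hedges : q.edges = t.edges ++ d.edges := by rw [← hsplit, edges_append]
  have hlen : t.length + d.length = q.length := by rw [← hsplit, length_append]
  have hdisj : ∀ f ∈ t.edges, f ∉ d.edges := fun f hf =>
    List.disjoint_of_nodup_append (hedges ▸ hq) hf
  have length_pos {x y : V} {r : G.Walk x y} (hr : s(a, b) ∈ r.edges) : 0 < r.length :=
    r.length_edges ▸ List.length_pos_of_mem hr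
  rcases List.mem_append.mp (hedges ▸ he) with het | hed
  · refine ⟨d.reverse, ?_, ?_, ?_⟩
    · simp only [edges_reverse, List.reverse_subset, hedges]
      exact List.subset_append_right _ _
    · simpa only [edges_reverse, List.mem_reverse] using hdisj _ het
    · have := length_pos het
      rw [length_reverse]
      omega
  · refine ⟨t, hedges ▸ List.subset_append_left _ _, fun het => hdisj _ het hed, ?_⟩
    have := length_pos hed
    omega

lemma exists_walk_avoiding_edge_of_edges_nodup {u a b : V} (p : G.Walk u u)
    (hp : p.edges.Nodup) (he : s(a, b) ∈ p.edges) :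
    ∃ w : G.Walk a b, w.edges ⊆ p.edges ∧ s(a, b) ∉ w.edges ∧ w.length < p.length := by
  classical
  have ha : a ∈ p.support := p.fst_mem_support_of_mem_edges he
  have hrot := p.rotate_edges a ha
  obtain ⟨w, hwq, hwe, hwlen⟩ := exists_walk_avoiding_edge_of_closed_at (p.rotate a ha)
    (hrot.perm.nodup_iff.mpr hp) (hrot.mem_iff.mpr he)
  exact ⟨w, fun f hf => hrot.mem_iff.mp (hwq hf), hwe, p.length_rotate a ha ▸ hwlen⟩

end SimpleGraph.Walk

lemma IsParallelGreedy.lt_length_of_edges_mem_earlier {V : Type*} {G : SimpleGraph V} {s k : ℕ}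
    {M : Fin k → SimpleGraph V} (hPG : IsParallelGreedy G s k M) {i : Fin k} {a b : V}
    (hab : (M i).Adj a b) (w : G.Walk a b)
    (hw : ∀ f ∈ w.edges, ∃ j < i, f ∈ (M j).edgeSet) : s < w.length := by
  have hsup : ∀ f ∈ w.edges, f ∈ (⨆ j : {j : Fin k // j < i}, M j.1).edgeSet := by
    intro f hf
    obtain ⟨j, hji, hj⟩ := hw f hf
    exact edgeSet_mono (le_iSup (fun j : {j : Fin k // j < i} => M j.1) ⟨j, hji⟩) hj
  simpa only [Walk.length_transfer] using hPG.2.2.2.2 i a b hab (w.transfer _ hsup)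

theorem parallel_greedy_cycle_two_edges_in_top_matching_general
    {V : Type*} (G : SimpleGraph V) (s k : ℕ)
    (M : Fin k → SimpleGraph V) (hPG : IsParallelGreedy G s k M)
    {u : V} (p : G.Walk u u) (hcyc : p.IsCycle) (hlen : p.length ≤ s + 1)
    (i : Fin k) (hi : ∃ e ∈ p.edges, e ∈ (M i).edgeSet)
    (hmax : ∀ j : Fin k, (∃ e ∈ p.edges, e ∈ (M j).edgeSet) → j ≤ i) :
    ∃ e₁ e₂ : Sym2 V, e₁ ≠ e₂ ∧ e₁ ∈ p.edges ∧ e₂ ∈ p.edges ∧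
      e₁ ∈ (M i).edgeSet ∧ e₂ ∈ (M i).edgeSet := by
  by_contra! honly
  obtain ⟨e, hep, hei⟩ := hi
  induction e using Sym2.ind with
  | _ a b =>
  obtain ⟨w, hwp, hwe, hwlen⟩ :=
    p.exists_walk_avoiding_edge_of_edges_nodup hcyc.isTrail.edges_nodup hep
  have hearlier : ∀ f ∈ w.edges, ∃ j < i, f ∈ (M j).edgeSet := by
    intro f hf
    obtain ⟨j, hj⟩ := hPG.2.1 f (w.edges_subset_edgeSet hf)
    refine ⟨j, lt_of_le_of_ne (hmax j ⟨f, hwp hf, hj⟩) ?_, hj⟩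
    rintro rfl
    by_cases hfe : f = s(a, b)
    · exact hwe (hfe ▸ hf)
    · exact honly f s(a, b) hfe (hwp hf) hep hj hei
  have := hPG.lt_length_of_edges_mem_earlier hei w hearlier
  omega

/-- If `G` is an `s`-parallel-greedy graph (`s ≥ 2`) and `C` is a cycle of `G` with at most
`s+1` edges, then the highest-indexed matching containing an edge of `C` contains at least
two edges of `C`. -/
theorem parallel_greedy_cycle_two_edges_in_top_matching
    {V : Type*} (G : SimpleGraph V) (s k : ℕ) (hs : 2 ≤ s)
    (M : Fin k → SimpleGraph V) (hPG : IsParallelGreedy G s k M)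
    {u : V} (p : G.Walk u u) (hcyc : p.IsCycle) (hlen : p.length ≤ s + 1)
    (i : Fin k) (hi : ∃ e ∈ p.edges, e ∈ (M i).edgeSet)
    (hmax : ∀ j : Fin k, (∃ e ∈ p.edges, e ∈ (M j).edgeSet) → j ≤ i) :
    ∃ e₁ e₂ : Sym2 V, e₁ ≠ e₂ ∧ e₁ ∈ p.edges ∧ e₂ ∈ p.edges ∧
      e₁ ∈ (M i).edgeSet ∧ e₂ ∈ (M i).edgeSet :=
  parallel_greedy_cycle_two_edges_in_top_matching_general G s k M hPG p hcyc hlen i hi hmax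
end

section
/- In an s-parallel-greedy graph G with s even, for any two vertices u, v there is at most one monotonic path from u to v consisting of exactly s/2 edges. -/
/-!
Reverse both paths, so that the matching indices decrease along them, and compare their first
edges. If the first edge `uw` of one path lies in `M i` and every edge of the other path comes from
a matching before `M i`, then the other path followed by the rest of the first one, reversed, is a
walk from `u` to `w` through earlier matchings; its length is at most `s`, contradicting the greedy
choice of `uw`. Hence both first edges lie in the same matching, so they coincide, and we induct.
-/

open SimpleGraph

/-- A walk is monotonic (w.r.t. the matchings `M`) if its edges can be assigned
strictly increasing matching indices, each edge belonging to its assigned matching. -/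
def IsMonotonic {V : Type*} {G : SimpleGraph V} {k : ℕ} (M : Fin k → SimpleGraph V)
    {u v : V} (p : G.Walk u v) : Prop :=
  ∃ l : List (Fin k), l.Chain' (· < ·) ∧
    List.Forall₂ (fun e i => e ∈ (M i).edgeSet) p.edges l

theorem List.Forall₂.exists_of_mem_left {α β : Type*} {R : α → β → Prop} {l₁ : List α}
    {l₂ : List β} (h : List.Forall₂ R l₁ l₂) {a : α} (ha : a ∈ l₁) : ∃ b ∈ l₂, R a b := by
  induction h with
  | nil => cases ha
  | cons hab _ ih =>
    rcases List.mem_cons.mp ha with rfl | ha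
    · exact ⟨_, List.mem_cons_self, hab⟩
    · obtain ⟨b, hb, hab'⟩ := ih ha
      exact ⟨b, List.mem_cons_of_mem _ hb, hab'⟩

theorem List.Pairwise.forall_mem_lt_of_lt {α : Type*} [Preorder α] {a b : α} {l : List α}
    (hl : (a :: l).Pairwise (· > ·)) (hab : a < b) : ∀ x ∈ a :: l, x < b := by
  intro x hx
  rcases List.mem_cons.mp hx with rfl | hx
  · exact hab
  · exact ((List.pairwise_cons.mp hl).1 x hx).trans hab

namespace IsParallelGreedy

variable {V : Type*} {G : SimpleGraph V} {s k : ℕ} {M : Fin k → SimpleGraph V}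

theorem exists_lt_of_forall₂ {i : Fin k} {es : List (Sym2 V)} {l : List (Fin k)}
    (h : List.Forall₂ (fun e j => e ∈ (M j).edgeSet) es l) (hl : ∀ j ∈ l, j < i) :
    ∀ e ∈ es, ∃ j < i, e ∈ (M j).edgeSet := fun e he ↦ by
  obtain ⟨j, hj, hej⟩ := h.exists_of_mem_left he
  exact ⟨j, hl j hj, hej⟩

theorem lt_length_add_length (hPG : IsParallelGreedy G s k M) {i : Fin k} {u w v : V}
    (hadj : (M i).Adj u w) (p : G.Walk u v) (q : G.Walk w v)
    (hp : ∀ e ∈ p.edges, ∃ j < i, e ∈ (M j).edgeSet)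
    (hq : ∀ e ∈ q.edges, ∃ j < i, e ∈ (M j).edgeSet) :
    s < p.length + q.length := by
  have hsub : ∀ e ∈ (p.append q.reverse).edges,
      e ∈ (⨆ j : {j : Fin k // j < i}, M j.1).edgeSet := by
    intro e he
    rw [Walk.edges_append, Walk.edges_reverse, List.mem_append, List.mem_reverse] at he
    obtain ⟨j, hj, hej⟩ := he.elim (hp e) (hq e)
    exact edgeSet_mono (le_iSup (fun j : {j : Fin k // j < i} ↦ M j.1) ⟨j, hj⟩) hej
  simpa using hPG.2.2.2.2 i u w hadj ((p.append q.reverse).transfer _ hsub)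

theorem lt_length_add_length_cons (hPG : IsParallelGreedy G s k M) {u w v : V}
    (h : G.Adj u w) (q : G.Walk w v) {i : Fin k} {lq : List (Fin k)}
    (hlq : (i :: lq).Pairwise (· > ·))
    (hq : List.Forall₂ (fun e j => e ∈ (M j).edgeSet) (Walk.cons h q).edges (i :: lq))
    (p : G.Walk u v) {lp : List (Fin k)}
    (hp : List.Forall₂ (fun e j => e ∈ (M j).edgeSet) p.edges lp) (hlp : ∀ j ∈ lp, j < i) :
    s + 1 < p.length + (Walk.cons h q).length := by
  rw [Walk.edges_cons, List.forall₂_cons] at hq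
  have := hPG.lt_length_add_length hq.1 p q (exists_lt_of_forall₂ hp hlp)
    (exists_lt_of_forall₂ hq.2 (List.pairwise_cons.mp hlq).1)
  rw [Walk.length_cons]
  omega

theorem eq_of_pairwise_gt (hPG : IsParallelGreedy G s k M) {u v : V} (p q : G.Walk u v)
    {lp lq : List (Fin k)} (hlp : lp.Pairwise (· > ·))
    (hp : List.Forall₂ (fun e j => e ∈ (M j).edgeSet) p.edges lp)
    (hlq : lq.Pairwise (· > ·)) (hq : List.Forall₂ (fun e j => e ∈ (M j).edgeSet) q.edges lq)
    (hlen : p.length + q.length ≤ s + 1) : p = q := by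
  induction p generalizing lp lq with
  | nil =>
    cases q with
    | nil => rfl
    | cons h q =>
      obtain _ | ⟨i, lq⟩ := lq
      · simp at hq
      have := hPG.lt_length_add_length_cons h q hlq hq Walk.nil List.Forall₂.nil (by simp)
      omega
  | cons h p ih =>
    obtain _ | ⟨i, lp⟩ := lp
    · simp at hp
    cases q with
    | nil =>
      have := hPG.lt_length_add_length_cons h p hlp hp Walk.nil List.Forall₂.nil (by simp)
      omega
    | cons h' q =>
      obtain _ | ⟨i', lq⟩ := lq
      · simp at hq
      rcases lt_trichotomy i i' with hlt | rfl | hgt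
      · have := hPG.lt_length_add_length_cons h' q hlq hq _ hp (hlp.forall_mem_lt_of_lt hlt)
        omega
      · rw [Walk.edges_cons, List.forall₂_cons] at hp hq
        obtain rfl := hPG.2.2.2.1 i _ _ _ hp.1 hq.1
        rw [ih q (List.pairwise_cons.mp hlp).2 hp.2 (List.pairwise_cons.mp hlq).2 hq.2
          (by simp only [Walk.length_cons] at hlen; omega)]
      · have := hPG.lt_length_add_length_cons h p hlp hp _ hq (hlq.forall_mem_lt_of_lt hgt)
        omega

theorem eq_of_isMonotonic (hPG : IsParallelGreedy G s k M) {u v : V} {p q : G.Walk u v}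
    (hpm : IsMonotonic M p) (hqm : IsMonotonic M q) (hlen : p.length + q.length ≤ s + 1) :
    p = q := by
  obtain ⟨lp, hlp, hp⟩ := hpm
  obtain ⟨lq, hlq, hq⟩ := hqm
  refine Walk.reverse_injective (hPG.eq_of_pairwise_gt p.reverse q.reverse
    (lp := lp.reverse) (lq := lq.reverse) ?_ ?_ ?_ ?_ (by simpa using hlen))
  · exact List.pairwise_reverse.mpr (List.isChain_iff_pairwise.mp hlp)
  · simpa [Walk.edges_reverse] using hp
  · exact List.pairwise_reverse.mpr (List.isChain_iff_pairwise.mp hlq)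
  · simpa [Walk.edges_reverse] using hq

end IsParallelGreedy

theorem monotonic_path_unique_general
    {V : Type*} (G : SimpleGraph V) (s k : ℕ)
    (M : Fin k → SimpleGraph V) (hPG : IsParallelGreedy G s k M)
    (u v : V) (p q : G.Walk u v)
    (hpl : p.length = s / 2) (hql : q.length = s / 2)
    (hpm : IsMonotonic M p) (hqm : IsMonotonic M q) : p = q :=
  hPG.eq_of_isMonotonic hpm hqm (by omega)

/-- Dispersion lemma: in an `s`-parallel-greedy graph with `s` even, for any two vertices
`u, v` there is at most one monotonic path from `u` to `v` with exactly `s/2` edges. -/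
theorem monotonic_path_unique
    {V : Type*} (G : SimpleGraph V) (s k : ℕ) (hs : 2 ≤ s) (hse : Even s)
    (M : Fin k → SimpleGraph V) (hPG : IsParallelGreedy G s k M)
    (u v : V) (p q : G.Walk u v) (hp : p.IsPath) (hq : q.IsPath)
    (hpl : p.length = s / 2) (hql : q.length = s / 2)
    (hpm : IsMonotonic M p) (hqm : IsMonotonic M q) : p = q :=
  monotonic_path_unique_general G s k M hPG u v p q hpl hql hpm hqm
end

section
/- If an s-parallel-greedy graph G on n vertices has at least sn/2 edges (s even), then G contains at least sn/4 monotonic paths with exactly s/2 edges. -/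
open SimpleGraph


open SimpleGraph

/-!
Let `t + 1 = s / 2`. In an `s`-parallel-greedy graph a monotonic walk of length at most `s + 1`
is a path: if its last edge, which carries the largest matching index, closed a cycle, the rest
of the cycle would join the endpoints of that edge by at most `s` edges of earlier matchings.
Deleting the first edge of every monotonic path of length `t + 1` therefore kills all monotonic
walks of that length, and the weak counting lemma says the remaining graph has at most `t n / 2`
edges; so at least `s n / 2 - t n / 2 ≥ s n / 4` edges, one per path, were deleted.

The weak counting lemma holds for any graph covered by matchings `M 0, …, M (k - 1)` without
monotonic walks of length `t + 1`. Let `φ i v` be the length, capped at `t`, of the longest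
monotonic walk ending at `v` that only uses matchings of index `< i` (the cap costs nothing:
extending a walk of length `t` would give a forbidden one). Extending walks along the disjoint
edges of `M i` gives `∑ v, φ (i + 1) v ≥ ∑ v, φ i v + #(vertices covered by M i)`; these
numbers add up to at least `2 |E|`, while `∑ v, φ k v ≤ t n`.
-/

open Finset

section MonotonicWalks

variable {V : Type*} {k : ℕ}

def IsMonotonicBelow {G : SimpleGraph V} (M : Fin k → SimpleGraph V) (i : ℕ) {u v : V}
    (p : G.Walk u v) : Prop :=
  ∃ l : List (Fin k), l.IsChain (· < ·) ∧
    List.Forall₂ (fun e j => e ∈ (M j).edgeSet) p.edges l ∧ ∀ j ∈ l, (j : ℕ) < i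

section Monotonic

variable {G : SimpleGraph V} {M : Fin k → SimpleGraph V} {u v w : V}

lemma IsMonotonicBelow.isMonotonic {i : ℕ} {p : G.Walk u v} (hp : IsMonotonicBelow M i p) :
    IsMonotonic M p :=
  let ⟨l, hchain, hedges, _⟩ := hp
  ⟨l, hchain, hedges⟩

lemma IsMonotonicBelow.mono {i i' : ℕ} (hii' : i ≤ i') {p : G.Walk u v}
    (hp : IsMonotonicBelow M i p) : IsMonotonicBelow M i' p :=
  let ⟨l, hchain, hedges, hlt⟩ := hp
  ⟨l, hchain, hedges, fun j hj => (hlt j hj).trans_le hii'⟩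

lemma isMonotonicBelow_nil (i : ℕ) : IsMonotonicBelow M i (Walk.nil : G.Walk v v) :=
  ⟨[], List.isChain_nil, List.Forall₂.nil, by simp⟩

lemma IsMonotonicBelow.exists_lt {j : ℕ} {p : G.Walk u v} (hp : IsMonotonicBelow M j p) :
    ∀ e ∈ p.edges, ∃ j' : Fin k, (j' : ℕ) < j ∧ e ∈ (M j').edgeSet := by
  obtain ⟨l, -, hedges, hlt⟩ := hp
  intro e he
  obtain ⟨n, hn, rfl⟩ := List.mem_iff_getElem.mp he
  have hn' : n < l.length := hedges.length_eq ▸ hn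
  exact ⟨l[n], hlt _ (List.getElem_mem hn'), hedges.get hn hn'⟩

lemma IsMonotonicBelow.concat {i : Fin k} {p : G.Walk u v} (hp : IsMonotonicBelow M i p)
    (hG : G.Adj v w) (hM : (M i).Adj v w) : IsMonotonicBelow M (i + 1) (p.concat hG) := by
  obtain ⟨l, hchain, hedges, hlt⟩ := hp
  refine ⟨l ++ [i], ?_, ?_, ?_⟩
  · refine List.isChain_append.mpr ⟨hchain, List.isChain_singleton _, ?_⟩
    rintro a ha b (rfl | _)
    exact Fin.lt_def.mpr (hlt a (List.mem_of_mem_getLast? ha))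
  · rw [Walk.edges_concat, List.concat_eq_append]
    exact List.rel_append hedges (.cons hM .nil)
  · simp only [List.mem_append, List.mem_singleton]
    rintro j (hj | rfl)
    · exact (hlt j hj).trans (Nat.lt_succ_self _)
    · exact Nat.lt_succ_self _

lemma IsMonotonic.exists_isMonotonicBelow_of_concat {p : G.Walk u v} {h : G.Adj v w}
    (hp : IsMonotonic M (p.concat h)) :
    ∃ j : Fin k, (M j).Adj v w ∧ IsMonotonicBelow M j p := by
  obtain ⟨l, hchain, hedges⟩ := hp
  rw [Walk.edges_concat, List.concat_eq_append, ← List.forall₂_reverse_iff,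
    List.reverse_append, List.reverse_singleton, List.singleton_append] at hedges
  obtain ⟨j, l', hj, hedges', hl⟩ := List.forall₂_cons_left_iff.mp hedges
  rw [List.reverse_eq_cons_iff] at hl
  subst hl
  have hpair := List.pairwise_append.mp (List.isChain_iff_pairwise.mp hchain)
  refine ⟨j, hj, l'.reverse, hpair.1.isChain, ?_, fun j' hj' =>
    Fin.lt_def.mp (hpair.2.2 j' hj' j (List.mem_singleton_self j))⟩
  rwa [← List.forall₂_reverse_iff, List.reverse_reverse]

lemma IsMonotonic.mapLe {G' : SimpleGraph V} {M' : Fin k → SimpleGraph V} (hGG' : G ≤ G')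
    (hMM' : ∀ i, M i ≤ M' i) {p : G.Walk u v} (hp : IsMonotonic M p) :
    IsMonotonic M' (p.mapLe hGG') := by
  obtain ⟨l, hchain, hedges⟩ := hp
  refine ⟨l, hchain, ?_⟩
  rw [Walk.edges_mapLe_eq_edges]
  exact hedges.imp fun e j he => edgeSet_mono (hMM' j) he

end Monotonic

section Greedy

variable {G : SimpleGraph V} {s : ℕ} {M : Fin k → SimpleGraph V}

lemma IsParallelGreedy.lt_length {j : Fin k} {u v : V} (hPG : IsParallelGreedy G s k M)
    (huv : (M j).Adj u v) (p : G.Walk u v)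
    (hp : ∀ e ∈ p.edges, ∃ j' : Fin k, j' < j ∧ e ∈ (M j').edgeSet) : s < p.length := by
  let earlier := ⨆ j' : {j' : Fin k // j' < j}, M j'.1
  have hearlier : ∀ e ∈ p.edges, e ∈ earlier.edgeSet := fun e he =>
    let ⟨j', hj', hej'⟩ := hp e he
    edgeSet_mono (le_iSup (fun j' : {j' : Fin k // j' < j} => M j'.1) ⟨j', hj'⟩) hej'
  have := hPG.2.2.2.2 j u v huv (p.transfer earlier hearlier)
  rwa [Walk.length_transfer] at this

lemma IsParallelGreedy.isPath_of_isMonotonic (hPG : IsParallelGreedy G s k M) {u v : V}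
    (p : G.Walk u v) (hp : IsMonotonic M p) (hlen : p.length ≤ s + 1) : p.IsPath := by
  classical
  induction p using Walk.concatRec with
  | Hnil => exact Walk.IsPath.nil
  | @Hconcat u v w q h ih =>
    obtain ⟨j, hj, hq⟩ := hp.exists_isMonotonicBelow_of_concat
    rw [Walk.length_concat] at hlen
    refine (ih hq.isMonotonic (by omega)).concat (fun hw => ?_) h
    have hshort := hPG.lt_length hj.symm (q.dropUntil w hw) fun e he =>
      hq.exists_lt e (q.edges_dropUntil_subset_edges hw he)
    have := q.length_dropUntil_le_length hw
    omega

lemma IsParallelGreedy.not_isMonotonic_of_deleteEdges (hPG : IsParallelGreedy G s k M) {n : ℕ}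
    (hn : n ≠ 0) (hns : n ≤ s + 1) {F : Set (Sym2 V)}
    (hF : ∀ u v (p : G.Walk u v), p.IsPath → p.length = n → IsMonotonic M p →
      s(u, p.snd) ∈ F)
    {u v : V} (p : (G.deleteEdges F).Walk u v) (hlen : p.length = n) :
    ¬IsMonotonic (fun i => (M i).deleteEdges F) p := by
  intro hp
  let q := p.mapLe (G.deleteEdges_le F)
  have hq : IsMonotonic M q := hp.mapLe _ fun i => (M i).deleteEdges_le F
  have hqlen : q.length = n := by rw [Walk.length_mapLe, hlen]
  have hfirst := q.mk_start_snd_mem_edges (by rw [← Walk.length_eq_zero_iff]; omega)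
  rw [Walk.edges_mapLe_eq_edges] at hfirst
  have hH := p.edges_subset_edgeSet hfirst
  rw [edgeSet_deleteEdges] at hH
  exact hH.2 (hF u v q (hPG.isPath_of_isMonotonic q hq (by omega)) hqlen hq)

end Greedy

lemma add_sum_le_of_add_le_succ {β : Type*} [AddCommMonoid β] [PartialOrder β]
    [IsOrderedAddMonoid β] {k : ℕ} (a : ℕ → β) (c : Fin k → β)
    (h : ∀ i : Fin k, a i + c i ≤ a (i + 1)) : a 0 + ∑ i, c i ≤ a k := by
  induction k with
  | zero => simp
  | succ k ih =>
    rw [Fin.sum_univ_castSucc, ← add_assoc]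
    calc a 0 + ∑ i : Fin k, c i.castSucc + c (Fin.last k)
        ≤ a k + c (Fin.last k) := by
          gcongr
          exact ih _ fun i => by simpa using h i.castSucc
      _ ≤ a (k + 1) := h (Fin.last k)

section WeakCounting

open Classical

noncomputable def matchingPartner (M : SimpleGraph V) (v : V) : V :=
  if h : ∃ u, M.Adj v u then h.choose else v

section Partner

variable {M : SimpleGraph V} {u v : V}

lemma matchingPartner_eq (hM : ∀ ⦃v u w⦄, M.Adj v u → M.Adj v w → u = w) (h : M.Adj v u) :
    matchingPartner M v = u := by
  have hex : ∃ u, M.Adj v u := ⟨u, h⟩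
  rw [matchingPartner, dif_pos hex]
  exact hM hex.choose_spec h

lemma matchingPartner_eq_self (h : ¬∃ u, M.Adj v u) : matchingPartner M v = v :=
  dif_neg h

lemma matchingPartner_involutive (hM : ∀ ⦃v u w⦄, M.Adj v u → M.Adj v w → u = w) :
    Function.Involutive (matchingPartner M) := by
  intro v
  by_cases h : ∃ u, M.Adj v u
  · obtain ⟨u, hu⟩ := h
    rw [matchingPartner_eq hM hu, matchingPartner_eq hM hu.symm]
  · rw [matchingPartner_eq_self h, matchingPartner_eq_self h]

end Partner

structure IsMatchingCover (G : SimpleGraph V) (M : Fin k → SimpleGraph V) : Prop where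
  le : ∀ i, M i ≤ G
  exists_adj : ∀ ⦃u v⦄, G.Adj u v → ∃ i, (M i).Adj u v
  eq_of_adj : ∀ i ⦃v u w⦄, (M i).Adj v u → (M i).Adj v w → u = w

section MatchingCover

variable {G : SimpleGraph V} {M : Fin k → SimpleGraph V}

lemma IsParallelGreedy.isMatchingCover {s : ℕ} (hPG : IsParallelGreedy G s k M) :
    IsMatchingCover G M :=
  ⟨hPG.1, fun u v huv => hPG.2.1 s(u, v) huv, hPG.2.2.2.1⟩

lemma IsMatchingCover.deleteEdges (hM : IsMatchingCover G M) (F : Set (Sym2 V)) :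
    IsMatchingCover (G.deleteEdges F) fun i => (M i).deleteEdges F where
  le i := deleteEdges_mono (hM.le i)
  exists_adj _ _ huv :=
    let ⟨i, hi⟩ := hM.exists_adj huv.1
    ⟨i, hi, huv.2⟩
  eq_of_adj i _ _ _ hu hw := hM.eq_of_adj i hu.1 hw.1

lemma IsMatchingCover.degree_le_card [Fintype V] [DecidableRel G.Adj]
    (hM : IsMatchingCover G M) (v : V) : G.degree v ≤ #{i | ∃ u, (M i).Adj v u} := by
  rw [← card_neighborFinset_eq_degree]
  refine card_le_card_of_surjOn (fun i => matchingPartner (M i) v) fun u hu => ?_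
  obtain ⟨i, hi⟩ := hM.exists_adj ((mem_neighborFinset _ _ _).mp hu)
  exact ⟨i, by simpa using ⟨u, hi⟩, matchingPartner_eq (hM.eq_of_adj i) hi⟩

end MatchingCover

noncomputable def monotonicPotential (G : SimpleGraph V) (M : Fin k → SimpleGraph V)
    (t i : ℕ) (v : V) : ℕ :=
  Nat.findGreatest
    (fun d => ∃ (u : V) (p : G.Walk u v), p.length = d ∧ IsMonotonicBelow M i p) t

lemma exists_walk_length_eq_monotonicPotential (G : SimpleGraph V) (M : Fin k → SimpleGraph V)
    (t i : ℕ) (v : V) :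
    ∃ (u : V) (p : G.Walk u v), p.length = monotonicPotential G M t i v ∧
      IsMonotonicBelow M i p :=
  Nat.findGreatest_spec (P := fun d => ∃ (u : V) (p : G.Walk u v), p.length = d ∧
    IsMonotonicBelow M i p) (Nat.zero_le t) ⟨v, Walk.nil, rfl, isMonotonicBelow_nil i⟩

section Potential

variable {G : SimpleGraph V} {M : Fin k → SimpleGraph V} {t : ℕ}

lemma monotonicPotential_le (i : ℕ) (v : V) : monotonicPotential G M t i v ≤ t :=
  Nat.findGreatest_le t

lemma monotonicPotential_mono {i i' : ℕ} (hii' : i ≤ i') (v : V) :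
    monotonicPotential G M t i v ≤ monotonicPotential G M t i' v :=
  Nat.findGreatest_mono_left (fun _ ⟨u, p, hlen, hp⟩ => ⟨u, p, hlen, hp.mono hii'⟩) t

lemma monotonicPotential_add_one_le
    (hfree : ∀ u v (p : G.Walk u v), p.length = t + 1 → ¬IsMonotonic M p)
    {i : Fin k} (hMG : M i ≤ G) {u v : V} (huv : (M i).Adj u v) :
    monotonicPotential G M t i u + 1 ≤ monotonicPotential G M t (i + 1) v := by
  obtain ⟨w, p, hlen, hp⟩ := exists_walk_length_eq_monotonicPotential G M t i u
  have hp' := hp.concat (hMG huv) huv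
  have hlen' : (p.concat (hMG huv)).length = monotonicPotential G M t i u + 1 := by
    rw [Walk.length_concat, hlen]
  have hle : monotonicPotential G M t i u + 1 ≤ t := by
    by_contra hlt
    have : monotonicPotential G M t i u ≤ t := monotonicPotential_le i u
    exact hfree _ _ _ (by omega) hp'.isMonotonic
  exact Nat.le_findGreatest hle ⟨w, _, hlen', hp'⟩

lemma IsMatchingCover.sum_monotonicPotential_add_card_le [Fintype V] (hM : IsMatchingCover G M)
    (hfree : ∀ u v (p : G.Walk u v), p.length = t + 1 → ¬IsMonotonic M p) (i : Fin k) :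
    ∑ v, monotonicPotential G M t i v + #{v | ∃ u, (M i).Adj v u} ≤
      ∑ v, monotonicPotential G M t (i + 1) v := by
  let σ := (matchingPartner_involutive (hM.eq_of_adj i)).toPerm
  calc ∑ v, monotonicPotential G M t i v + #{v | ∃ u, (M i).Adj v u}
      = ∑ v, (monotonicPotential G M t i (σ v) + if ∃ u, (M i).Adj v u then 1 else 0) := by
        rw [sum_add_distrib, Equiv.sum_comp σ, card_filter]
    _ ≤ ∑ v, monotonicPotential G M t (i + 1) v := sum_le_sum fun v _ => ?_
  by_cases h : ∃ u, (M i).Adj v u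
  · obtain ⟨u, hu⟩ := h
    rw [if_pos ⟨u, hu⟩]
    change monotonicPotential G M t i (matchingPartner (M i) v) + 1 ≤ _
    rw [matchingPartner_eq (hM.eq_of_adj i) hu]
    exact monotonicPotential_add_one_le hfree (hM.le i) hu.symm
  · rw [if_neg h, add_zero]
    change monotonicPotential G M t i (matchingPartner (M i) v) ≤ _
    rw [matchingPartner_eq_self h]
    exact monotonicPotential_mono (Nat.le_succ _) v

end Potential

theorem IsMatchingCover.two_mul_card_edgeFinset_le [Fintype V] {G : SimpleGraph V}
    [DecidableRel G.Adj] {M : Fin k → SimpleGraph V} (hM : IsMatchingCover G M) {t : ℕ}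
    (hfree : ∀ u v (p : G.Walk u v), p.length = t + 1 → ¬IsMonotonic M p) :
    2 * #G.edgeFinset ≤ t * Fintype.card V := by
  calc 2 * #G.edgeFinset = ∑ v, G.degree v := (sum_degrees_eq_twice_card_edges G).symm
    _ ≤ ∑ v, #{i | ∃ u, (M i).Adj v u} := sum_le_sum fun v _ => hM.degree_le_card v
    _ = ∑ i, #{v | ∃ u, (M i).Adj v u} := by simp only [card_filter]; exact sum_comm
    _ ≤ ∑ v, monotonicPotential G M t 0 v + ∑ i, #{v | ∃ u, (M i).Adj v u} := le_add_self
    _ ≤ ∑ v, monotonicPotential G M t k v :=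
        add_sum_le_of_add_le_succ (fun n => ∑ v, monotonicPotential G M t n v) _
          (hM.sum_monotonicPotential_add_card_le hfree)
    _ ≤ ∑ _v : V, t := sum_le_sum fun v _ => monotonicPotential_le k v
    _ = t * Fintype.card V := by rw [sum_const, card_univ, smul_eq_mul, mul_comm]

end WeakCounting

lemma SimpleGraph.finite_setOf_walk_length_eq [Fintype V] (G : SimpleGraph V) [DecidableRel G.Adj]
    (n : ℕ) : {x : (u : V) × (v : V) × G.Walk u v | x.2.2.length = n}.Finite := by
  classical
  exact (Set.finite_range fun x : (u : V) × (v : V) × {p : G.Walk u v // p.length = n} =>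
    (⟨x.1, x.2.1, x.2.2.1⟩ : (u : V) × (v : V) × G.Walk u v)).subset
      fun ⟨u, v, p⟩ hp => ⟨⟨u, v, p, hp⟩, rfl⟩

end MonotonicWalks

theorem monotonic_path_count_lower_bound_general
    {V : Type*} [Fintype V] (G : SimpleGraph V) [DecidableRel G.Adj]
    (s k : ℕ) (hs : 2 ≤ s)
    (M : Fin k → SimpleGraph V) (hPG : IsParallelGreedy G s k M)
    (hm : s * Fintype.card V ≤ 2 * G.edgeFinset.card) :
    {x : (u : V) × (v : V) × G.Walk u v |
        x.2.2.IsPath ∧ x.2.2.length = s / 2 ∧ IsMonotonic M x.2.2}.Finite ∧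
    s * Fintype.card V ≤ 4 *
      {x : (u : V) × (v : V) × G.Walk u v |
        x.2.2.IsPath ∧ x.2.2.length = s / 2 ∧ IsMonotonic M x.2.2}.ncard := by
  classical
  set P := {x : (u : V) × (v : V) × G.Walk u v |
    x.2.2.IsPath ∧ x.2.2.length = s / 2 ∧ IsMonotonic M x.2.2}
  have hPfin : P.Finite := (G.finite_setOf_walk_length_eq (s / 2)).subset fun _ hx => hx.2.1
  refine ⟨hPfin, ?_⟩
  obtain ⟨t, ht⟩ : ∃ t, s / 2 = t + 1 := ⟨s / 2 - 1, by omega⟩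
  let F := hPfin.toFinset.image fun x => s(x.1, x.2.2.snd)
  have hfree : ∀ u v (p : (G.deleteEdges F).Walk u v), p.length = t + 1 →
      ¬IsMonotonic (fun i => (M i).deleteEdges F) p := by
    refine fun u v p hlen => hPG.not_isMonotonic_of_deleteEdges (by omega) (by omega) ?_ p hlen
    intro u v q hq hqlen hmono
    exact mem_image.mpr
      ⟨⟨u, v, q⟩, hPfin.mem_toFinset.mpr ⟨hq, hqlen.trans ht.symm, hmono⟩, rfl⟩
  have hweak := (hPG.isMatchingCover.deleteEdges F).two_mul_card_edgeFinset_le hfree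
  have hdelete : #G.edgeFinset ≤ #(G.deleteEdges F).edgeFinset + P.ncard := by
    rw [edgeFinset_deleteEdges, Set.ncard_eq_toFinset_card P hPfin]
    exact card_le_card_sdiff_add_card.trans (Nat.add_le_add_left card_image_le _)
  have hst : (2 * t + 2) * Fintype.card V ≤ s * Fintype.card V :=
    Nat.mul_le_mul_right _ (by omega)
  linarith

/-- Medium counting lemma: if an `s`-parallel-greedy graph `G` on `n` vertices has at least
`s·n/2` edges (`s` even), then `G` contains at least `s·n/4` monotonic paths with exactly
`s/2` edges. -/
theorem monotonic_path_count_lower_bound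
    {V : Type*} [Fintype V] [DecidableEq V] (G : SimpleGraph V) [DecidableRel G.Adj]
    (s k : ℕ) (hs : 2 ≤ s) (hse : Even s)
    (M : Fin k → SimpleGraph V) (hPG : IsParallelGreedy G s k M)
    (hm : s * Fintype.card V ≤ 2 * G.edgeFinset.card) :
    {x : (u : V) × (v : V) × G.Walk u v |
        x.2.2.IsPath ∧ x.2.2.length = s / 2 ∧ IsMonotonic M x.2.2}.Finite ∧
    s * Fintype.card V ≤ 4 *
      {x : (u : V) × (v : V) × G.Walk u v |
        x.2.2.IsPath ∧ x.2.2.length = s / 2 ∧ IsMonotonic M x.2.2}.ncard :=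
  monotonic_path_count_lower_bound_general G s k hs M hPG hm
end

section
/- Every s-parallel-greedy graph on n vertices has average degree at most C·s·n^{2/s} for an absolute constant C, assuming s is even. -/
open SimpleGraph


open SimpleGraph

/-!
Label every edge by the index of its matching. Greediness makes walks along which the labels
decrease *disperse*: two such walks from a common vertex with a common endpoint and total length
at most `s` coincide, since where they part the edge of larger label would be closed by a short
walk through smaller labels. So there are at most `n²` descending walks of length `t = s / 2`.
On the other hand, call a dart `v → w` `τ`-rich if at least `λ` of the `(τ - 1)`-rich darts
leaving `w` have smaller label. Going from `τ` to `τ + 1` loses at most `λ` darts per vertex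
(those with fewer than `λ` smaller labels at their tail), so for `λ ≈ d / s` most darts stay
`(t - 1)`-rich, and each of them starts `λ ^ (t - 1)` descending walks. Comparing the two counts
gives `λ ^ t ≤ n`, that is `d = O(s n ^ (2 / s))`.
-/

open Finset

theorem Finset.card_filter_card_filter_lt_lt_le {α : Type*} (S : Finset α) {f : α → ℕ}
    (hf : Set.InjOn f S) (m : ℕ) : #{a ∈ S | #{b ∈ S | f b < f a} < m} ≤ m := by
  classical
  set rank : α → ℕ := fun a => #{b ∈ S | f b < f a}
  have rank_lt : ∀ a ∈ S, ∀ a' ∈ S, f a < f a' → rank a < rank a' := by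
    intro a ha a' ha' hlt
    refine card_lt_card ⟨fun b hb => ?_, fun hsub => ?_⟩
    · simp only [mem_filter] at hb ⊢
      exact ⟨hb.1, hb.2.trans hlt⟩
    · simpa using hsub (mem_filter.2 ⟨ha, hlt⟩)
  have rank_injOn : Set.InjOn rank ↑({a ∈ S | rank a < m} : Finset α) := by
    intro a ha a' ha' he
    rw [mem_coe, mem_filter] at ha ha'
    by_contra hne
    have hfne : f a ≠ f a' := fun h => hne (hf ha.1 ha'.1 h)
    rcases hfne.lt_or_gt with hlt | hlt
    · exact (rank_lt a ha.1 a' ha'.1 hlt).ne he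
    · exact (rank_lt a' ha'.1 a ha.1 hlt).ne he.symm
  calc #{a ∈ S | rank a < m} ≤ #(range m) :=
        card_le_card_of_injOn rank (fun a ha => by simpa using (mem_filter.1 ha).2) rank_injOn
    _ = m := card_range m

namespace SimpleGraph

variable {V : Type*} {G : SimpleGraph V} {c : Sym2 V → ℕ} {s : ℕ}

def IsProperLabelling (G : SimpleGraph V) (c : Sym2 V → ℕ) : Prop :=
  ∀ ⦃v u w⦄, G.Adj v u → G.Adj v w → c s(v, u) = c s(v, w) → u = w

def IsGreedyLabelling (G : SimpleGraph V) (s : ℕ) (c : Sym2 V → ℕ) : Prop :=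
  ∀ ⦃u v⦄, G.Adj u v → ∀ p : G.Walk u v, (∀ e ∈ p.edges, c e < c s(u, v)) → s < p.length

namespace Walk

def IsDescendingBelow (c : Sym2 V → ℕ) : ℕ → {u v : V} → G.Walk u v → Prop
  | _, _, _, nil => True
  | b, u, _, cons (v := w) _ p => c s(u, w) < b ∧ IsDescendingBelow c (c s(u, w)) p

theorem IsDescendingBelow.lt {u v : V} {p : G.Walk u v} {b : ℕ}
    (hp : p.IsDescendingBelow c b) : ∀ e ∈ p.edges, c e < b := by
  induction p generalizing b with
  | nil => simp
  | cons h p ih =>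
    obtain ⟨hlt, hp⟩ := hp
    simp only [edges_cons, List.forall_mem_cons]
    exact ⟨hlt, fun e he => (ih hp e he).trans hlt⟩

end Walk

open Walk

theorem IsGreedyLabelling.lt_length_add_length (hg : IsGreedyLabelling G s c) {v w x : V}
    (h : G.Adj v w) (p : G.Walk v x) (q : G.Walk w x) (hp : ∀ e ∈ p.edges, c e < c s(v, w))
    (hq : ∀ e ∈ q.edges, c e < c s(v, w)) : s < p.length + q.length := by
  have := hg h (p.append q.reverse) fun e he => by
    rw [edges_append, edges_reverse, List.mem_append, List.mem_reverse] at he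
    exact he.elim (hp e) (hq e)
  simpa using this

theorem IsGreedyLabelling.eq_of_isDescendingBelow (hg : IsGreedyLabelling G s c)
    (hc : IsProperLabelling G c) {v x : V} {p q : G.Walk v x} {b b' : ℕ}
    (hp : p.IsDescendingBelow c b) (hq : q.IsDescendingBelow c b')
    (hpq : p.length + q.length ≤ s) : p = q := by
  induction p generalizing b b' with
  | nil =>
    cases q with
    | nil => rfl
    | cons h q =>
      have := hg.lt_length_add_length h nil q (by simp) hq.2.lt
      simp only [length_nil, length_cons] at hpq this
      omega
  | @cons v w₁ x h₁ p ih =>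
    cases q with
    | nil =>
      have := hg.lt_length_add_length h₁ nil p (by simp) hp.2.lt
      simp only [length_nil, length_cons] at hpq this
      omega
    | @cons _ w₂ _ h₂ q =>
      simp only [length_cons] at hpq
      by_cases hw : w₁ = w₂
      · subst hw
        rw [ih hp.2 hq.2 (by omega)]
      have hne : c s(v, w₁) ≠ c s(v, w₂) := fun he => hw (hc h₁ h₂ he)
      rcases hne.lt_or_gt with hlt | hlt
      · have := hg.lt_length_add_length h₂ (cons h₁ p) q
          (IsDescendingBelow.lt (b := c s(v, w₂)) ⟨hlt, hp.2⟩) hq.2.lt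
        simp only [length_cons] at this
        omega
      · have := hg.lt_length_add_length h₁ (cons h₂ q) p
          (IsDescendingBelow.lt (b := c s(v, w₁)) ⟨hlt, hq.2⟩) hp.2.lt
        simp only [length_cons] at this
        omega

variable [Fintype V] [DecidableRel G.Adj]

variable (G c) in
/-- `w ∈ G.richNeighbors c lam τ v` when the dart `v → w` is `τ`-rich. -/
def richNeighbors (lam : ℕ) : ℕ → V → Finset V
  | 0, v => G.neighborFinset v
  | τ + 1, v =>
    {w ∈ G.neighborFinset v | lam ≤ #{x ∈ richNeighbors lam τ w | c s(w, x) < c s(v, w)}}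

theorem adj_of_mem_richNeighbors {lam τ : ℕ} {v w : V} (h : w ∈ G.richNeighbors c lam τ v) :
    G.Adj v w := by
  cases τ <;> simp_all [richNeighbors]

theorem sum_card_richNeighbors_zero (lam : ℕ) :
    ∑ v, #(G.richNeighbors c lam 0 v) = 2 * #G.edgeFinset := by
  simp [richNeighbors, sum_degrees_eq_twice_card_edges]

variable [DecidableEq V]

theorem sum_card_richNeighbors_le_succ (hc : IsProperLabelling G c) (lam τ : ℕ) :
    ∑ v, #(G.richNeighbors c lam τ v) ≤
      ∑ v, #(G.richNeighbors c lam (τ + 1) v) + Fintype.card V * lam := by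
  have key : ∀ v, #(G.richNeighbors c lam τ v) ≤
      #{w | v ∈ G.richNeighbors c lam (τ + 1) w} + lam := by
    intro v
    set S := G.richNeighbors c lam τ v
    have hS : S ⊆ ({w | v ∈ G.richNeighbors c lam (τ + 1) w} : Finset V) ∪
        {w ∈ S | #{x ∈ S | c s(v, x) < c s(v, w)} < lam} := by
      intro w hw
      by_cases hlam : lam ≤ #{x ∈ S | c s(v, x) < c s(v, w)}
      · refine mem_union_left _ (mem_filter.2 ⟨mem_univ w, ?_⟩)
        simp only [richNeighbors, mem_filter, mem_neighborFinset]
        exact ⟨(adj_of_mem_richNeighbors hw).symm, by rwa [Sym2.eq_swap]⟩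
      · exact mem_union_right _ (mem_filter.2 ⟨hw, not_le.1 hlam⟩)
    have hinj : Set.InjOn (fun w => c s(v, w)) S := fun w hw w' hw' =>
      hc (adj_of_mem_richNeighbors hw) (adj_of_mem_richNeighbors hw')
    exact (card_le_card hS).trans <| (card_union_le _ _).trans <|
      Nat.add_le_add_left (card_filter_card_filter_lt_lt_le S hinj lam) _
  calc ∑ v, #(G.richNeighbors c lam τ v)
      ≤ ∑ v, (#{w | v ∈ G.richNeighbors c lam (τ + 1) w} + lam) := sum_le_sum fun v _ => key v
    _ = ∑ w, #(G.richNeighbors c lam (τ + 1) w) + Fintype.card V * lam := by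
      have hswap := sum_card_bipartiteAbove_eq_sum_card_bipartiteBelow (s := univ) (t := univ)
        (fun w v => v ∈ G.richNeighbors c lam (τ + 1) w)
      simp only [bipartiteAbove, bipartiteBelow, filter_univ_mem] at hswap
      simp [sum_add_distrib, hswap]

theorem two_mul_card_edgeFinset_le_sum_card_richNeighbors (hc : IsProperLabelling G c)
    (lam τ : ℕ) :
    2 * #G.edgeFinset ≤ ∑ v, #(G.richNeighbors c lam τ v) + τ * (Fintype.card V * lam) := by
  induction τ with
  | zero => simp [sum_card_richNeighbors_zero]
  | succ τ ih =>
    have := sum_card_richNeighbors_le_succ hc lam τ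
    rw [add_mul, one_mul]
    omega

variable (G c) in
def descWalks : ℕ → ℕ → (v : V) → Finset (Σ x, G.Walk v x)
  | 0, _, v => {⟨v, nil⟩}
  | τ + 1, b, v => univ.biUnion fun w =>
      if h : G.Adj v w ∧ c s(v, w) < b then
        (descWalks τ (c s(v, w)) w).map
          ⟨fun q => ⟨q.1, cons h.1 q.2⟩, by rintro ⟨x, q⟩ ⟨y, r⟩ e; cases e; rfl⟩
      else ∅

theorem mem_descWalks {τ b : ℕ} {v x : V} {p : G.Walk v x} :
    ⟨x, p⟩ ∈ G.descWalks c τ b v ↔ p.length = τ ∧ p.IsDescendingBelow c b := by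
  constructor
  · intro hp
    induction τ generalizing b v x p with
    | zero =>
      cases mem_singleton.1 hp
      exact ⟨rfl, trivial⟩
    | succ τ ih =>
      simp only [descWalks, mem_biUnion, mem_univ, true_and] at hp
      obtain ⟨w, hw⟩ := hp
      split_ifs at hw with h
      · obtain ⟨⟨y, r⟩, hr, e⟩ := mem_map.1 hw
        cases e
        obtain ⟨hl, hr⟩ := ih hr
        exact ⟨by simp [hl], h.2, hr⟩
      · exact (notMem_empty _ hw).elim
  · rintro ⟨rfl, hp⟩
    induction p generalizing b with
    | nil => simp [descWalks]
    | cons h p ih =>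
      simp only [length_cons, descWalks, mem_biUnion, mem_univ, true_and]
      exact ⟨_, by rw [dif_pos ⟨h, hp.1⟩]; exact mem_map.2 ⟨_, ih hp.2, rfl⟩⟩

theorem IsGreedyLabelling.card_descWalks_le (hg : IsGreedyLabelling G s c)
    (hc : IsProperLabelling G c) {τ : ℕ} (hτ : 2 * τ ≤ s) (b : ℕ) (v : V) :
    #(G.descWalks c τ b v) ≤ Fintype.card V := by
  rw [← card_univ]
  refine card_le_card_of_injOn Sigma.fst (fun _ _ => mem_coe.2 (mem_univ _)) ?_
  rintro ⟨x, p⟩ hp ⟨y, q⟩ hq (rfl : x = y)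
  obtain ⟨hpl, hpd⟩ := mem_descWalks.1 (mem_coe.1 hp)
  obtain ⟨hql, hqd⟩ := mem_descWalks.1 (mem_coe.1 hq)
  rw [hg.eq_of_isDescendingBelow hc hpd hqd (by omega)]

theorem card_descWalks_succ (τ b : ℕ) (v : V) :
    #(G.descWalks c (τ + 1) b v) =
      ∑ w with G.Adj v w ∧ c s(v, w) < b, #(G.descWalks c τ (c s(v, w)) w) := by
  rw [descWalks, card_biUnion, sum_filter]
  · refine sum_congr rfl fun w _ => ?_
    split_ifs <;> simp
  · intro w _ w' _ hne
    refine Finset.disjoint_left.2 fun q hw hw' => hne ?_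
    dsimp only at hw hw'
    split_ifs at hw hw' <;> try exact (notMem_empty _ ‹_›).elim
    obtain ⟨⟨y, r⟩, -, rfl⟩ := mem_map.1 hw
    obtain ⟨⟨y', r'⟩, -, e⟩ := mem_map.1 hw'
    cases e
    rfl

theorem card_mul_le_card_descWalks_succ {τ b m : ℕ} {v : V} {A : Finset V}
    (hA : ∀ w ∈ A, G.Adj v w ∧ c s(v, w) < b)
    (hm : ∀ w ∈ A, m ≤ #(G.descWalks c τ (c s(v, w)) w)) :
    #A * m ≤ #(G.descWalks c (τ + 1) b v) := by
  rw [card_descWalks_succ, ← smul_eq_mul]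
  exact (card_nsmul_le_sum A _ m hm).trans
    (sum_le_sum_of_subset fun w hw => mem_filter.2 ⟨mem_univ w, hA w hw⟩)

theorem pow_le_card_descWalks {lam τ : ℕ} {v w : V} (h : w ∈ G.richNeighbors c lam τ v) :
    lam ^ τ ≤ #(G.descWalks c τ (c s(v, w)) w) := by
  induction τ generalizing v w with
  | zero => simp [descWalks]
  | succ τ ih =>
    simp only [richNeighbors, mem_filter] at h
    calc lam ^ (τ + 1) = lam * lam ^ τ := by ring
      _ ≤ #{x ∈ G.richNeighbors c lam τ w | c s(w, x) < c s(v, w)} * lam ^ τ :=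
        Nat.mul_le_mul_right _ h.2
      _ ≤ _ := card_mul_le_card_descWalks_succ
        (fun x hx => ⟨adj_of_mem_richNeighbors (mem_filter.1 hx).1, (mem_filter.1 hx).2⟩)
        (fun x hx => ih (mem_filter.1 hx).1)

theorem IsGreedyLabelling.sum_card_richNeighbors_mul_pow_le (hg : IsGreedyLabelling G s c)
    (hc : IsProperLabelling G c) {τ : ℕ} (hτ : 2 * (τ + 1) ≤ s) (lam : ℕ) :
    (∑ v, #(G.richNeighbors c lam τ v)) * lam ^ τ ≤ Fintype.card V * Fintype.card V := by
  set b := G.edgeFinset.sup c + 1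
  have hb : ∀ ⦃v w⦄, G.Adj v w → c s(v, w) < b := fun v w h =>
    Nat.lt_succ_of_le (le_sup (mem_edgeFinset.2 h))
  calc (∑ v, #(G.richNeighbors c lam τ v)) * lam ^ τ
      = ∑ v, #(G.richNeighbors c lam τ v) * lam ^ τ := sum_mul _ _ _
    _ ≤ ∑ v, #(G.descWalks c (τ + 1) b v) := sum_le_sum fun v _ =>
      card_mul_le_card_descWalks_succ
        (fun w hw => ⟨adj_of_mem_richNeighbors hw, hb (adj_of_mem_richNeighbors hw)⟩)
        (fun w hw => pow_le_card_descWalks hw)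
    _ ≤ ∑ _v : V, Fintype.card V := sum_le_sum fun v _ => hg.card_descWalks_le hc hτ b v
    _ = Fintype.card V * Fintype.card V := by simp

theorem IsGreedyLabelling.pow_le_card (hg : IsGreedyLabelling G s c)
    (hc : IsProperLabelling G c) {t lam : ℕ} (ht : 1 ≤ t) (hts : 2 * t ≤ s)
    (hn : 0 < Fintype.card V) (hlam : t * Fintype.card V * lam ≤ #G.edgeFinset) :
    lam ^ t ≤ Fintype.card V := by
  obtain ⟨τ, rfl⟩ := Nat.exists_eq_add_of_le' ht
  have hlow := two_mul_card_edgeFinset_le_sum_card_richNeighbors hc lam τ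
  have hup := hg.sum_card_richNeighbors_mul_pow_le hc hts lam
  set n := Fintype.card V
  set R := ∑ v, #(G.richNeighbors c lam τ v)
  have hR : n * lam ≤ R := by nlinarith
  refine Nat.le_of_mul_le_mul_left ?_ hn
  calc n * lam ^ (τ + 1) = n * lam * lam ^ τ := by ring
    _ ≤ R * lam ^ τ := Nat.mul_le_mul_right _ hR
    _ ≤ n * n := hup

theorem IsGreedyLabelling.average_degree_le (hg : IsGreedyLabelling G s c)
    (hc : IsProperLabelling G c) (hs : 2 ≤ s) (hse : Even s) :
    2 * #G.edgeFinset / Fintype.card V ≤ 2 * s * (Fintype.card V : ℝ) ^ ((2 : ℝ) / s) := by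
  obtain ⟨t, rfl⟩ := hse
  set n := Fintype.card V
  rcases Nat.eq_zero_or_pos n with hn | hn
  · rw [hn, Nat.cast_zero, div_zero]
    positivity
  set lam := #G.edgeFinset / (t * n)
  have htn : 0 < t * n := Nat.mul_pos (by omega) hn
  have hpow : lam ^ t ≤ n :=
    hg.pow_le_card hc (by omega) (by omega) hn (by rw [mul_comm]; exact Nat.div_mul_le_self _ _)
  have hE : (#G.edgeFinset : ℝ) ≤ t * n * (lam + 1) := by
    exact_mod_cast (Nat.lt_mul_div_succ _ htn).le
  set X := (n : ℝ) ^ ((t : ℝ)⁻¹)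
  have hlamX : (lam : ℝ) ≤ X :=
    calc (lam : ℝ) = ((lam : ℝ) ^ t) ^ ((t : ℝ)⁻¹) :=
          (Real.pow_rpow_inv_natCast (by positivity) (by omega)).symm
      _ ≤ X := Real.rpow_le_rpow (by positivity) (by exact_mod_cast hpow) (by positivity)
  have hX : 1 ≤ X := Real.one_le_rpow (by exact_mod_cast hn) (by positivity)
  have hexp : (2 : ℝ) / ↑(t + t) = (t : ℝ)⁻¹ := by
    push_cast
    field_simp
    ring
  rw [hexp, div_le_iff₀ (by positivity)]
  calc 2 * (#G.edgeFinset : ℝ) ≤ 2 * (t * n * (lam + 1)) := by gcongr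
    _ ≤ 2 * (t * n * (X + X)) := by gcongr
    _ = 2 * ↑(t + t) * X * n := by push_cast; ring

end SimpleGraph

section ParallelGreedy

variable {V : Type*} {G : SimpleGraph V} {s k : ℕ} {M : Fin k → SimpleGraph V}

open Classical in
/-- The index of the matching containing `e` (junk `0` if there is none). -/
noncomputable def matchingLabel (M : Fin k → SimpleGraph V) (e : Sym2 V) : ℕ :=
  if h : ∃ i, e ∈ (M i).edgeSet then h.choose else 0

theorem matchingLabel_eq (hM : Pairwise fun i j => Disjoint (M i).edgeSet (M j).edgeSet)
    {e : Sym2 V} {i : Fin k} (he : e ∈ (M i).edgeSet) : matchingLabel M e = i := by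
  have h : ∃ i, e ∈ (M i).edgeSet := ⟨i, he⟩
  rw [matchingLabel, dif_pos h, Fin.val_inj]
  by_contra hne
  exact Set.disjoint_left.1 (hM hne) h.choose_spec he

theorem IsParallelGreedy.isProperLabelling (hG : IsParallelGreedy G s k M) :
    G.IsProperLabelling (matchingLabel M) := by
  obtain ⟨-, hcov, hdisj, hmatch, -⟩ := hG
  intro v u w hu hw he
  obtain ⟨i, hi⟩ := hcov _ (G.mem_edgeSet.2 hu)
  obtain ⟨j, hj⟩ := hcov _ (G.mem_edgeSet.2 hw)
  rw [matchingLabel_eq hdisj hi, matchingLabel_eq hdisj hj, Fin.val_inj] at he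
  subst he
  exact hmatch i v u w hi hj

theorem IsParallelGreedy.isGreedyLabelling (hG : IsParallelGreedy G s k M) :
    G.IsGreedyLabelling s (matchingLabel M) := by
  obtain ⟨-, hcov, hdisj, -, hgreedy⟩ := hG
  intro u v huv p hp
  obtain ⟨i, hi⟩ := hcov _ (G.mem_edgeSet.2 huv)
  rw [matchingLabel_eq hdisj hi] at hp
  have hpH : ∀ e ∈ p.edges, e ∈ (⨆ j : {j : Fin k // j < i}, M j.1).edgeSet := by
    intro e he
    obtain ⟨j, hj⟩ := hcov e (p.edges_subset_edgeSet he)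
    have hji : j < i := by simpa [matchingLabel_eq hdisj hj] using hp e he
    exact edgeSet_mono (le_iSup (fun j : {j : Fin k // j < i} => M j.1) ⟨j, hji⟩) hj
  simpa using hgreedy i u v hi (p.transfer _ hpH)

end ParallelGreedy

/-- There is an absolute constant `C` such that every `s`-parallel-greedy graph on `n`
vertices (`s` even) has average degree `2m/n` at most `C·s·n^(2/s)`. -/
theorem parallel_greedy_average_degree :
    ∃ C : ℝ, 0 < C ∧
      ∀ (V : Type) [Fintype V] [DecidableEq V] (G : SimpleGraph V) [DecidableRel G.Adj]
        (s k : ℕ) (M : Fin k → SimpleGraph V), IsParallelGreedy G s k M → 2 ≤ s → Even s →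
        2 * G.edgeFinset.card / Fintype.card V ≤
          C * s * (Fintype.card V : ℝ) ^ ((2 : ℝ) / s) := by
  refine ⟨2, two_pos, fun V _ _ G _ s k M hG hs hse => ?_⟩
  exact hG.isGreedyLabelling.average_degree_le hG.isProperLabelling hs hse
end

section
/- Every s-parallel-greedy graph on n vertices has arboricity at most C·s·n^{2/s} for an absolute constant C. -/
open SimpleGraph

/-- `G` can be covered by `α` forests, i.e. `G` has arboricity at most `α`. -/
def HasForestCover {V : Type*} (G : SimpleGraph V) (α : ℕ) : Prop :=
  ∃ F : Fin α → SimpleGraph V, (∀ i, F i ≤ G) ∧ (∀ i, (F i).IsAcyclic) ∧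
    ∀ e ∈ G.edgeSet, ∃ i, e ∈ (F i).edgeSet

/-!
Put `R = ⌈s/2⌉`. Following the matching edges at strictly decreasing times gives *descending*
walks. Two descending walks of total length at most `2R ≤ s + 1` from the same vertex with the
same end would form a closed walk whose edge of largest time has, between its ends, a walk of
length at most `s` through earlier edges only; so the descending walks of length `R` from a
vertex have pairwise distinct ends.

Call a matched pair `(x, i)` `ρ`-branching if at `q` earlier times `x` is matched to a
`(ρ - 1)`-branching pair. Passing from level `ρ` to level `ρ + 1` a vertex `x` loses at most
`min q (deg x)` of its branching partners' times (those with fewer than `q` such times before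
them), and the matching swaps the two ends of a pair. Hence if every non-isolated vertex has
degree more than `R q`, the `R` levels lose less than the total degree, a pair is `R`-branching
and its `q ^ R` descending walks give `q ^ R ≤ n`. Taking `q = ⌊n ^ (1/R)⌋ + 1`, every
nonempty subgraph (again parallel-greedy) has a vertex of positive degree at most `R q`, and
peeling such vertices gives `R q ≤ 2 s n ^ (2/s)` forests.
-/

open scoped Classical

namespace SimpleGraph

variable {V : Type*}

theorem IsAcyclic.sup_edge_of_isolated {H : SimpleGraph V} (hH : H.IsAcyclic) {w u : V}
    (hw : ∀ y, ¬H.Adj w y) (hwu : w ≠ u) : (H ⊔ edge w u).IsAcyclic :=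
  hH.sup_edge_of_not_reachable fun ⟨p⟩ => by
    cases p with
    | nil => exact hwu rfl
    | cons h _ => exact hw _ h

variable [Fintype V] {G : SimpleGraph V} {D : ℕ}

/-- Each forest covering the rest receives one edge at `w` as a pendant edge; as `deg w ≤ D`,
every edge at `w` can be received. -/
theorem HasForestCover.of_deleteIncidenceSet {w : V}
    (h : HasForestCover (G.deleteIncidenceSet w) D)
    (hw₀ : 0 < G.degree w) (hwD : G.degree w ≤ D) : HasForestCover G D := by
  obtain ⟨F, hFle, hFac, hFcov⟩ := h
  have : Nonempty (G.neighborSet w) := by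
    obtain ⟨u, hu⟩ := G.degree_pos_iff_exists_adj w |>.mp hw₀
    exact ⟨⟨u, hu⟩⟩
  obtain ⟨f⟩ : Nonempty (G.neighborSet w ↪ Fin D) :=
    Function.Embedding.nonempty_of_card_le (by rwa [Fintype.card_fin, card_neighborSet_eq_degree])
  set t : Fin D → G.neighborSet w := Function.invFun f
  have ht : t.Surjective := Function.invFun_surjective f.injective
  refine ⟨fun i => F i ⊔ edge w (t i), fun i => ?_, fun i => ?_, fun e he => ?_⟩
  · exact sup_le ((hFle i).trans (G.deleteIncidenceSet_le w))
      ((edge_le_iff _).mpr (.inr (t i).2))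
  · exact (hFac i).sup_edge_of_isolated
      (fun y hy => (deleteIncidenceSet_adj.mp (hFle i hy)).2.1 rfl)
      (G.ne_of_adj (t i).2)
  by_cases hwe : w ∈ e
  · obtain ⟨u, rfl⟩ := Sym2.mem_iff_exists.mp hwe
    obtain ⟨i, hi⟩ := ht ⟨u, he⟩
    refine ⟨i, ?_⟩
    rw [mem_edgeSet]
    exact .inr <| hi ▸ ((edge_adj ..).mpr ⟨.inl ⟨rfl, rfl⟩, G.ne_of_adj he⟩)
  · obtain ⟨i, hi⟩ := hFcov e (by rw [edgeSet_deleteIncidenceSet]; exact ⟨he, fun h => hwe h.2⟩)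
    exact ⟨i, edgeSet_mono le_sup_left hi⟩

theorem hasForestCover_of_forall_exists_degree_le
    (h : ∀ H ≤ G, H.edgeSet.Nonempty → ∃ w, 0 < H.degree w ∧ H.degree w ≤ D) :
    HasForestCover G D := by
  induction G using WellFoundedLT.induction with
  | _ G ih =>
  rcases G.edgeSet.eq_empty_or_nonempty with hG | hG
  · exact ⟨fun _ => ⊥, fun _ => bot_le, fun _ => isAcyclic_bot, by simp [hG]⟩
  obtain ⟨w, hw₀, hwD⟩ := h G le_rfl hG
  obtain ⟨u, hu⟩ := G.degree_pos_iff_exists_adj w |>.mp hw₀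
  have hlt : G.deleteIncidenceSet w < G :=
    lt_of_le_of_ne (G.deleteIncidenceSet_le w) fun heq =>
      (deleteIncidenceSet_adj.mp (by rwa [heq] : (G.deleteIncidenceSet w).Adj w u)).2.1 rfl
  exact (ih _ hlt fun H hH => h H (hH.trans hlt.le)).of_deleteIncidenceSet hw₀ hwD

end SimpleGraph

open SimpleGraph Finset

theorem Finset.card_filter_card_filter_lt_lt_le_s7 {α : Type*} [LinearOrder α] (P : Finset α)
    (q : ℕ) : #{i ∈ P | #{j ∈ P | j < i} < q} ≤ q := by
  have hmono : StrictMonoOn (fun i => #{j ∈ P | j < i}) P := fun a ha b _ hab =>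
    card_lt_card <| (ssubset_iff_of_subset (monotone_filter_right _ fun _ _ h => h.trans hab)).mpr
      ⟨a, mem_filter.mpr ⟨ha, hab⟩, by simp⟩
  calc #{i ∈ P | #{j ∈ P | j < i} < q} ≤ #(range q) :=
        card_le_card_of_injOn _ (fun i hi => by simpa using (mem_filter.mp hi).2)
          (hmono.injOn.mono (filter_subset _ _))
    _ = q := card_range q

namespace IsParallelGreedy

variable {V : Type*} {k : ℕ} (M : Fin k → SimpleGraph V)

/-- An unmatched vertex is its own partner, so that `partner M · i` is an involution. -/
noncomputable def partner (x : V) (i : Fin k) : V :=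
  if h : x ∈ (M i).support then ((M i).mem_support.mp h).choose else x

/-- Starting at `x`, one can follow the matching edges at the times `i₁ > i₂ > ⋯` of the list. -/
def IsDescending : V → List (Fin k) → Prop
  | _, [] => True
  | x, i :: L => x ∈ (M i).support ∧ (∀ j ∈ L, j < i) ∧ IsDescending (partner M x i) L

noncomputable def follow : V → List (Fin k) → V
  | x, [] => x
  | x, i :: L => follow (partner M x i) L

def before (i : Fin k) : SimpleGraph V := ⨆ j : {j : Fin k // j < i}, M j.1

variable {M}

theorem partner_adj {x : V} {i : Fin k} (h : x ∈ (M i).support) :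
    (M i).Adj x (partner M x i) := by
  rw [partner, dif_pos h]
  exact ((M i).mem_support.mp h).choose_spec

theorem partner_mem_support {x : V} {i : Fin k} (h : x ∈ (M i).support) :
    partner M x i ∈ (M i).support :=
  ⟨x, (partner_adj h).symm⟩

theorem adj_before {i j : Fin k} (hj : j < i) {a b : V} (h : (M j).Adj a b) :
    (before M i).Adj a b :=
  le_iSup (fun j : {j : Fin k // j < i} => M j.1) ⟨j, hj⟩ h

theorem exists_walk_before_follow {x : V} {L : List (Fin k)} (hL : IsDescending M x L)
    {i : Fin k} (hi : ∀ j ∈ L, j < i) :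
    ∃ p : (before M i).Walk x (follow M x L), p.length = L.length := by
  induction L generalizing x with
  | nil => exact ⟨.nil, rfl⟩
  | cons j L ih =>
    obtain ⟨hx, -, hL⟩ := hL
    obtain ⟨p, hp⟩ := ih hL fun a ha => hi a (List.mem_cons_of_mem _ ha)
    exact ⟨.cons (adj_before (hi j List.mem_cons_self) (partner_adj hx)) p, congrArg (· + 1) hp⟩

section Matching

variable (hM : ∀ i, ∀ v u w : V, (M i).Adj v u → (M i).Adj v w → u = w)
include hM

theorem partner_eq_of_adj {x y : V} {i : Fin k} (h : (M i).Adj x y) : partner M x i = y :=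
  hM i x _ y (partner_adj ⟨y, h⟩) h

theorem partner_partner {x : V} {i : Fin k} (h : x ∈ (M i).support) :
    partner M (partner M x i) i = x :=
  partner_eq_of_adj hM (partner_adj h).symm

end Matching

section Distance

variable {s : ℕ} (hs : ∀ i : Fin k, ∀ u v : V, (M i).Adj u v → ∀ p : (before M i).Walk u v,
  s < p.length)
include hs

/-- Two descending walks from `x` with a common end close up, through the edge at the
largest time `i` involved, into a walk that avoids all edges from time `i` on. -/
theorem lt_length_add_length_of_follow_eq {x : V} {i : Fin k} {L₁ L₂ : List (Fin k)}
    (h₁ : IsDescending M x (i :: L₁)) (h₂ : IsDescending M x L₂) (hi : ∀ j ∈ L₂, j < i)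
    (heq : follow M x (i :: L₁) = follow M x L₂) : s < L₁.length + L₂.length := by
  obtain ⟨hx, hL₁, h₁⟩ := h₁
  obtain ⟨p₁, hp₁⟩ := exists_walk_before_follow h₁ hL₁
  obtain ⟨p₂, hp₂⟩ := exists_walk_before_follow h₂ hi
  have heq : follow M (partner M x i) L₁ = follow M x L₂ := heq
  have := hs i x _ (partner_adj hx) (p₂.append ((p₁.copy rfl heq).reverse))
  simpa [hp₁, hp₂, add_comm] using this

theorem eq_of_follow_eq {x : V} {L₁ L₂ : List (Fin k)} (h₁ : IsDescending M x L₁)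
    (h₂ : IsDescending M x L₂) (hlen : L₁.length + L₂.length ≤ s + 1)
    (heq : follow M x L₁ = follow M x L₂) : L₁ = L₂ := by
  induction L₁ generalizing x L₂ with
  | nil =>
    cases L₂ with
    | nil => rfl
    | cons i L₂ =>
      have := lt_length_add_length_of_follow_eq hs h₂ h₁ (by simp) heq.symm
      simp only [List.length_cons] at hlen this
      omega
  | cons i₁ L₁ ih =>
    cases L₂ with
    | nil =>
      have := lt_length_add_length_of_follow_eq hs h₁ h₂ (by simp) heq
      simp only [List.length_cons] at hlen this
      omega
    | cons i₂ L₂ =>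
      rcases lt_trichotomy i₁ i₂ with hlt | rfl | hlt
      · have := lt_length_add_length_of_follow_eq hs h₂ h₁
          (by simpa using ⟨hlt, fun j hj => (h₁.2.1 j hj).trans hlt⟩) heq.symm
        simp only [List.length_cons] at hlen this
        omega
      · rw [ih h₁.2.2 h₂.2.2 (by simp only [List.length_cons] at hlen; omega) heq]
      · have := lt_length_add_length_of_follow_eq hs h₁ h₂
          (by simpa using ⟨hlt, fun j hj => (h₂.2.1 j hj).trans hlt⟩) heq
        simp only [List.length_cons] at hlen this
        omega

end Distance

variable (M) in
def Branching (q : ℕ) : ℕ → V → Fin k → Prop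
  | 0, x, i => x ∈ (M i).support
  | ρ + 1, x, i => x ∈ (M i).support ∧
      q ≤ #{j | j < i ∧ x ∈ (M j).support ∧ Branching q ρ (partner M x j) j}

variable (M) in
noncomputable def descents : ℕ → V → Fin k → Finset (List (Fin k))
  | 0, _, _ => {[]}
  | ρ + 1, x, i => ({j | j < i ∧ x ∈ (M j).support} : Finset (Fin k)).biUnion
      fun j => (descents ρ (partner M x j) j).map ⟨List.cons j, List.cons_injective⟩

theorem Branching.mem_support {q ρ : ℕ} {x : V} {i : Fin k} (hB : Branching M q ρ x i) :
    x ∈ (M i).support := by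
  cases ρ
  exacts [hB, hB.1]

theorem isDescending_of_mem_descents {ρ : ℕ} {x : V} {i : Fin k} {L : List (Fin k)}
    (hL : L ∈ descents M ρ x i) : IsDescending M x L ∧ L.length = ρ ∧ ∀ j ∈ L, j < i := by
  induction ρ generalizing x i L with
  | zero => simp_all [descents, IsDescending]
  | succ ρ ih =>
    simp only [descents, mem_biUnion, mem_filter, mem_univ, true_and, mem_map,
      Function.Embedding.coeFn_mk] at hL
    obtain ⟨j, ⟨hji, hx⟩, L, hL, rfl⟩ := hL
    obtain ⟨hdesc, hlen, hlt⟩ := ih hL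
    refine ⟨⟨hx, hlt, hdesc⟩, by simp [hlen], ?_⟩
    simpa using ⟨hji, fun a ha => (hlt a ha).trans hji⟩

theorem pow_le_card_descents {q ρ : ℕ} {x : V} {i : Fin k} (hB : Branching M q ρ x i) :
    q ^ ρ ≤ #(descents M ρ x i) := by
  induction ρ generalizing x i with
  | zero => simp [descents]
  | succ ρ ih =>
    set T : Finset (Fin k) := {j | j < i ∧ x ∈ (M j).support ∧ Branching M q ρ (partner M x j) j}
    have hdisj : (({j | j < i ∧ x ∈ (M j).support} : Finset (Fin k)) : Set (Fin k)).PairwiseDisjoint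
        fun j => (descents M ρ (partner M x j) j).map ⟨List.cons j, List.cons_injective⟩ := by
      intro a _ b _ hab
      simp only [Function.onFun, Finset.disjoint_left, mem_map, Function.Embedding.coeFn_mk]
      rintro _ ⟨L, -, rfl⟩ ⟨L', -, h⟩
      exact hab (List.cons_eq_cons.mp h).1.symm
    calc q ^ (ρ + 1) ≤ #T * q ^ ρ := by rw [pow_succ']; exact Nat.mul_le_mul_right _ hB.2
      _ = ∑ _j ∈ T, q ^ ρ := by rw [sum_const, smul_eq_mul]
      _ ≤ ∑ j ∈ T, #(descents M ρ (partner M x j) j) :=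
        sum_le_sum fun j hj => ih (mem_filter.mp hj).2.2.2
      _ ≤ ∑ j ∈ {j | j < i ∧ x ∈ (M j).support}, #(descents M ρ (partner M x j) j) :=
        sum_le_sum_of_subset (monotone_filter_right _ fun j _ h => ⟨h.1, h.2.1⟩)
      _ = #(descents M (ρ + 1) x i) := by simp only [descents, card_biUnion hdisj, card_map]

theorem pow_le_card_of_branching [Fintype V] {s q ρ : ℕ}
    (hs : ∀ i : Fin k, ∀ u v : V, (M i).Adj u v → ∀ p : (before M i).Walk u v, s < p.length)
    (hρ : 2 * ρ ≤ s + 1) {x : V} {i : Fin k} (hB : Branching M q ρ x i) :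
    q ^ ρ ≤ Fintype.card V := by
  refine (pow_le_card_descents hB).trans (card_le_card_of_injOn (follow M x)
    (fun _ _ => mem_univ _) fun L₁ h₁ L₂ h₂ heq => ?_)
  obtain ⟨hd₁, hl₁, -⟩ := isDescending_of_mem_descents h₁
  obtain ⟨hd₂, hl₂, -⟩ := isDescending_of_mem_descents h₂
  exact eq_of_follow_eq hs hd₁ hd₂ (by omega) heq

section Counting

variable (M) in
noncomputable def matchDegree (x : V) : ℕ := #{i | x ∈ (M i).support}

variable (M) in
noncomputable def branchCount (q ρ : ℕ) (x : V) : ℕ := #{i | Branching M q ρ x i}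

theorem branchCount_zero (q : ℕ) (x : V) : branchCount M q 0 x = matchDegree M x := by
  simp only [branchCount, matchDegree]
  congr 1

variable [Fintype V]

theorem card_branching_partner_le (q ρ : ℕ) (x : V) :
    #{i | x ∈ (M i).support ∧ Branching M q ρ (partner M x i) i} ≤
      branchCount M q (ρ + 1) x + min q (matchDegree M x) := by
  set P : Finset (Fin k) := {i | x ∈ (M i).support ∧ Branching M q ρ (partner M x i) i}
  have hgood : #{i ∈ P | ¬#{j ∈ P | j < i} < q} ≤ branchCount M q (ρ + 1) x := by
    refine card_le_card fun i hi => ?_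
    simp only [P, mem_filter, mem_univ, true_and, not_lt] at hi ⊢
    refine ⟨hi.1.1, hi.2.trans (card_le_card fun j hj => ?_)⟩
    simp only [mem_filter, mem_univ, true_and] at hj ⊢
    exact ⟨hj.2, hj.1⟩
  have hbad : #{i ∈ P | #{j ∈ P | j < i} < q} ≤ matchDegree M x :=
    card_le_card fun i hi => by simp_all [P]
  have := card_filter_add_card_filter_not (s := P) fun i => #{j ∈ P | j < i} < q
  have := P.card_filter_card_filter_lt_lt_le_s7 q
  omega

variable (hM : ∀ i, ∀ v u w : V, (M i).Adj v u → (M i).Adj v w → u = w)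
include hM

theorem involutive_partner (i : Fin k) : Function.Involutive (partner M · i) := fun x => by
  by_cases hx : x ∈ (M i).support
  · exact partner_partner hM hx
  · simp only [partner, dif_neg hx]

theorem sum_card_branching_partner (q ρ : ℕ) :
    ∑ x, #{i | x ∈ (M i).support ∧ Branching M q ρ (partner M x i) i} =
      ∑ y, branchCount M q ρ y := by
  simp only [branchCount, card_filter]
  rw [sum_comm, sum_comm (γ := V)]
  refine sum_congr rfl fun i _ => ?_
  rw [← Equiv.sum_comp (involutive_partner hM i).toPerm]
  refine sum_congr rfl fun y _ => ?_
  simp only [Function.Involutive.coe_toPerm, involutive_partner hM i y]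
  exact if_congr (and_iff_right_of_imp fun hB => partner_mem_support hB.mem_support) rfl rfl

theorem sum_matchDegree_le (q ρ : ℕ) :
    ∑ x, matchDegree M x ≤ ∑ x, branchCount M q ρ x + ρ * ∑ x, min q (matchDegree M x) := by
  induction ρ with
  | zero => simp [branchCount_zero]
  | succ ρ ih =>
    have := (sum_card_branching_partner hM q ρ).symm.trans_le
      (sum_le_sum fun x _ => card_branching_partner_le q ρ x)
    rw [sum_add_distrib] at this
    linarith

theorem exists_branching {q R : ℕ} (hdeg : ∀ x, 0 < matchDegree M x → R * q < matchDegree M x)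
    (hne : ∃ x, 0 < matchDegree M x) : ∃ x i, Branching M q R x i := by
  obtain ⟨x₀, hx₀⟩ := hne
  have hlt : R * ∑ x, min q (matchDegree M x) < ∑ x, matchDegree M x := by
    rw [mul_sum]
    refine sum_lt_sum (fun x _ => ?_) ⟨x₀, mem_univ _, ?_⟩
    · rcases (matchDegree M x).eq_zero_or_pos with h | h
      · simp [h]
      · exact (Nat.mul_le_mul_left R (min_le_left _ _)).trans (hdeg x h).le
    · exact (Nat.mul_le_mul_left R (min_le_left _ _)).trans_lt (hdeg x₀ hx₀)
  obtain ⟨x, -, hx⟩ := exists_ne_zero_of_sum_ne_zero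
    (by have := sum_matchDegree_le hM q R; omega : ∑ x, branchCount M q R x ≠ 0)
  obtain ⟨i, hi⟩ := card_ne_zero.mp hx
  exact ⟨x, i, (mem_filter.mp hi).2⟩

end Counting

theorem exists_pos_matchDegree_le [Fintype V] {s q R : ℕ}
    (hM : ∀ i, ∀ v u w : V, (M i).Adj v u → (M i).Adj v w → u = w)
    (hs : ∀ i : Fin k, ∀ u v : V, (M i).Adj u v → ∀ p : (before M i).Walk u v, s < p.length)
    (hR : 2 * R ≤ s + 1) (hV : Fintype.card V < q ^ R) (hne : ∃ x, 0 < matchDegree M x) :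
    ∃ x, 0 < matchDegree M x ∧ matchDegree M x ≤ R * q := by
  by_contra! h
  obtain ⟨x, i, hB⟩ := exists_branching hM h hne
  exact (pow_le_card_of_branching hs hR hB).not_gt hV

variable {G : SimpleGraph V} {s : ℕ}

theorem degree_le_matchDegree [Fintype V] (hG : IsParallelGreedy G s k M) (x : V) :
    G.degree x ≤ matchDegree M x := by
  rw [← card_neighborFinset_eq_degree]
  refine card_le_card_of_surjOn (partner M x) fun y hy => ?_
  obtain ⟨i, hi⟩ := hG.2.1 s(x, y) ((mem_neighborFinset _ _ _).mp hy)
  exact ⟨i, by simpa using ⟨y, hi⟩, partner_eq_of_adj hG.2.2.2.1 hi⟩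

theorem exists_degree_le [Fintype V] {q R : ℕ} (hG : IsParallelGreedy G s k M)
    (hR : 2 * R ≤ s + 1) (hV : Fintype.card V < q ^ R) (hne : G.edgeSet.Nonempty) :
    ∃ w, 0 < G.degree w ∧ G.degree w ≤ R * q := by
  have hne' : ∃ x, 0 < matchDegree M x := by
    obtain ⟨⟨a, b⟩, he⟩ := hne
    obtain ⟨i, hi⟩ := hG.2.1 _ he
    exact ⟨a, card_pos.mpr ⟨i, by simpa using ⟨b, hi⟩⟩⟩
  obtain ⟨w, hw₀, hw⟩ := exists_pos_matchDegree_le hG.2.2.2.1 hG.2.2.2.2 hR hV hne'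
  refine ⟨w, ?_, (degree_le_matchDegree hG w).trans hw⟩
  obtain ⟨i, hi⟩ := card_pos.mp hw₀
  obtain ⟨y, hy⟩ : w ∈ (M i).support := by simpa using hi
  exact G.degree_pos_iff_exists_adj w |>.mpr ⟨y, hG.1 i hy⟩

theorem mono (hG : IsParallelGreedy G s k M) {H : SimpleGraph V} (hH : H ≤ G) :
    IsParallelGreedy H s k fun i => M i ⊓ H := by
  obtain ⟨-, hcov, hdisj, hM, hs⟩ := hG
  refine ⟨fun i => inf_le_right, fun e he => ?_, fun i j hij => ?_, fun i v u w hu hw =>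
    hM i v u w hu.1 hw.1, fun i u v huv p => ?_⟩
  · obtain ⟨i, hi⟩ := hcov e (edgeSet_mono hH he)
    exact ⟨i, by rw [edgeSet_inf]; exact ⟨hi, he⟩⟩
  · exact (hdisj hij).mono (edgeSet_mono inf_le_left) (edgeSet_mono inf_le_left)
  · simpa using hs i u v huv.1 (p.mapLe (iSup_mono fun j => inf_le_left))

end IsParallelGreedy

theorem lt_pow_floor_rpow_inv_add_one (n : ℕ) {R : ℕ} (hR : R ≠ 0) :
    n < (⌊(n : ℝ) ^ (R : ℝ)⁻¹⌋₊ + 1) ^ R := by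
  have h : ((n : ℝ) ^ (R : ℝ)⁻¹) ^ R < ((⌊(n : ℝ) ^ (R : ℝ)⁻¹⌋₊ + 1 : ℕ) : ℝ) ^ R := by
    push_cast
    exact pow_lt_pow_left₀ (Nat.lt_floor_add_one _) (by positivity) hR
  rw [Real.rpow_inv_natCast_pow (Nat.cast_nonneg n) hR] at h
  exact_mod_cast h

theorem mul_floor_rpow_inv_add_one_le {n R s : ℕ} (hn : 1 ≤ n) (hRs : R ≤ s) (hsR : s ≤ 2 * R) :
    (R : ℝ) * (⌊(n : ℝ) ^ (R : ℝ)⁻¹⌋₊ + 1) ≤ 2 * s * (n : ℝ) ^ ((2 : ℝ) / s) := by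
  rcases R.eq_zero_or_pos with rfl | hR
  · simp only [CharP.cast_eq_zero, zero_mul]
    positivity
  have hn : (1 : ℝ) ≤ n := by exact_mod_cast hn
  have hexp : (R : ℝ)⁻¹ ≤ 2 / s := by
    rw [inv_eq_one_div, div_le_div_iff₀ (by exact_mod_cast hR) (by exact_mod_cast hR.trans_le hRs)]
    exact_mod_cast (by omega : 1 * s ≤ 2 * R)
  have hfloor : (⌊(n : ℝ) ^ (R : ℝ)⁻¹⌋₊ : ℝ) ≤ (n : ℝ) ^ ((2 : ℝ) / s) :=
    (Nat.floor_le (by positivity)).trans (Real.rpow_le_rpow_of_exponent_le hn hexp)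
  have hone : (1 : ℝ) ≤ (n : ℝ) ^ ((2 : ℝ) / s) := Real.one_le_rpow hn (by positivity)
  calc (R : ℝ) * (⌊(n : ℝ) ^ (R : ℝ)⁻¹⌋₊ + 1)
      ≤ s * ((n : ℝ) ^ ((2 : ℝ) / s) + (n : ℝ) ^ ((2 : ℝ) / s)) := by gcongr
    _ = 2 * s * (n : ℝ) ^ ((2 : ℝ) / s) := by ring

/-- There is an absolute constant `C` such that every `s`-parallel-greedy graph on `n`
vertices has arboricity at most `C·s·n^(2/s)`. -/
theorem parallel_greedy_arboricity :
    ∃ C : ℝ, 0 < C ∧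
      ∀ (V : Type) [Fintype V] (G : SimpleGraph V)
        (s k : ℕ) (M : Fin k → SimpleGraph V), IsParallelGreedy G s k M → 2 ≤ s →
        ∃ α : ℕ, HasForestCover G α ∧
          (α : ℝ) ≤ C * s * (Fintype.card V : ℝ) ^ ((2 : ℝ) / s) := by
  refine ⟨2, two_pos, fun V _ G s k M hG hs => ?_⟩
  rcases (Fintype.card V).eq_zero_or_pos with hV | hV
  · have : IsEmpty V := Fintype.card_eq_zero_iff.mp hV
    refine ⟨0, hasForestCover_of_forall_exists_degree_le fun H _ ⟨e, _⟩ => isEmptyElim e, ?_⟩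
    rw [Nat.cast_zero]
    positivity
  set R := (s + 1) / 2
  refine ⟨R * (⌊(Fintype.card V : ℝ) ^ (R : ℝ)⁻¹⌋₊ + 1),
    hasForestCover_of_forall_exists_degree_le fun H hH hne =>
      (hG.mono hH).exists_degree_le (by omega)
        (lt_pow_floor_rpow_inv_add_one _ (by omega)) hne, ?_⟩
  push_cast
  exact mul_floor_rpow_inv_add_one_le hV (by omega) (by omega)
end
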